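/- Let H ∈ (1/2, 1) and t > 0. Then the Rosenblatt kernel f_t is square integrable on ℝ² and ∫_{ℝ²} f_t(x₁,x₂)² dx₁ dx₂ = t^{2H}/2. -/

import Mathlib

open MeasureTheory Real

/-- `y₊^a`: equals `y^a` if `y > 0` and `0` otherwise. -/
noncomputable def posPow (y a : ℝ) : ℝ := if 0 < y then y ^ a else 0

/-- The Euler Beta function `B(a,b) = Γ(a)Γ(b)/Γ(a+b)`. -/
noncomputable def realBeta (a b : ℝ) : ℝ := Gamma a * Gamma b / Gamma (a + b)

/-- The normalizing constant `c(H) = √(H(2H−1)/2) / B(1−H, H/2)`. -/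
noncomputable def cH (H : ℝ) : ℝ := Real.sqrt (H * (2*H - 1) / 2) / realBeta (1 - H) (H/2)

/-- The Rosenblatt kernel `f_t(x₁,x₂) = c(H) ∫₀ᵗ (s−x₁)₊^{H/2−1} (s−x₂)₊^{H/2−1} ds`. -/
noncomputable def rosKernel (H t x₁ x₂ : ℝ) : ℝ :=
  cH H * ∫ s in (0:ℝ)..t, posPow (s - x₁) (H/2 - 1) * posPow (s - x₂) (H/2 - 1)

open Set

section Aux

lemma posPow_of_pos {y : ℝ} (h : 0 < y) (a : ℝ) : posPow y a = y ^ a := if_pos h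

lemma posPow_of_nonpos {y : ℝ} (h : y ≤ 0) (a : ℝ) : posPow y a = 0 := if_neg (not_lt.2 h)

lemma posPow_nonneg (y a : ℝ) : 0 ≤ posPow y a := by
  unfold posPow; split
  · exact Real.rpow_nonneg (le_of_lt ‹_›) _
  · exact le_refl 0

lemma measurable_posPow (a : ℝ) : Measurable (fun y => posPow y a) := by
  unfold posPow
  exact Measurable.ite measurableSet_Ioi (by fun_prop) measurable_const

lemma realBeta_pos {a b : ℝ} (ha : 0 < a) (hb : 0 < b) : 0 < realBeta a b := by
  unfold realBeta
  exact div_pos (mul_pos (Real.Gamma_pos_of_pos ha) (Real.Gamma_pos_of_pos hb))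
    (Real.Gamma_pos_of_pos (by linarith))

lemma realBeta_symm (a b : ℝ) : realBeta a b = realBeta b a := by
  unfold realBeta; rw [mul_comm, add_comm]

lemma realBeta_facts {a b : ℝ} (ha : 0 < a) (hb : 0 < b) :
    IntegrableOn (fun x : ℝ => x ^ (a-1) * (1-x) ^ (b-1)) (Ioo 0 1) ∧
    ∫ x in Ioo (0:ℝ) 1, x ^ (a-1) * (1-x) ^ (b-1) = realBeta a b := by
  have ha' : 0 < (a:ℂ).re := by simpa using ha
  have hb' : 0 < (b:ℂ).re := by simpa using hb
  have hconv := Complex.betaIntegral_convergent ha' hb'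
  have hC : IntegrableOn (fun x : ℝ => (x:ℂ) ^ ((a:ℂ)-1) * (1-(x:ℂ)) ^ ((b:ℂ)-1)) (Ioo 0 1) := by
    have := (intervalIntegrable_iff_integrableOn_Ioc_of_le (zero_le_one)).1 hconv
    exact this.mono_set Ioo_subset_Ioc_self
  have heq : EqOn (fun x : ℝ => (x:ℂ) ^ ((a:ℂ)-1) * (1-(x:ℂ)) ^ ((b:ℂ)-1))
      (fun x : ℝ => ((x ^ (a-1) * (1-x) ^ (b-1) : ℝ) : ℂ)) (Ioo 0 1) := by
    intro x hx
    simp only []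
    rw [Complex.ofReal_mul, Complex.ofReal_cpow hx.1.le,
      Complex.ofReal_cpow (by linarith [hx.2] : (0:ℝ) ≤ 1 - x)]
    push_cast
    ring
  have hR : IntegrableOn (fun x : ℝ => x ^ (a-1) * (1-x) ^ (b-1)) (Ioo 0 1) := by
    have h2 : IntegrableOn (fun x : ℝ => ((x ^ (a-1) * (1-x) ^ (b-1) : ℝ) : ℂ)) (Ioo 0 1) :=
      hC.congr_fun heq measurableSet_Ioo
    simpa [IntegrableOn] using h2.re
  refine ⟨hR, ?_⟩
  have hbeta : Complex.betaIntegral a b = ((realBeta a b : ℝ) : ℂ) := by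
    have h := Complex.Gamma_mul_Gamma_eq_betaIntegral ha' hb'
    rw [show ((a:ℂ) + (b:ℂ)) = ((a+b : ℝ) : ℂ) by push_cast; ring] at h
    rw [Complex.Gamma_ofReal, Complex.Gamma_ofReal, Complex.Gamma_ofReal] at h
    have hG : Real.Gamma (a+b) ≠ 0 := (Real.Gamma_pos_of_pos (by linarith)).ne'
    unfold realBeta
    rw [Complex.ofReal_div, Complex.ofReal_mul,
      eq_div_iff (by exact_mod_cast hG : (Real.Gamma (a+b) : ℂ) ≠ 0)]
    rw [h]; ring
  have h1 : ∫ x in Ioo (0:ℝ) 1, ((x ^ (a-1) * (1-x) ^ (b-1) : ℝ) : ℂ)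
      = ((∫ x in Ioo (0:ℝ) 1, x ^ (a-1) * (1-x) ^ (b-1) : ℝ) : ℂ) := integral_ofReal
  have key : ((∫ x in Ioo (0:ℝ) 1, x ^ (a-1) * (1-x) ^ (b-1) : ℝ) : ℂ) = ((realBeta a b : ℝ) : ℂ) := by
    rw [← h1, ← setIntegral_congr_fun measurableSet_Ioo heq]
    rw [← integral_Ioc_eq_integral_Ioo, ← hbeta, Complex.betaIntegral,
      intervalIntegral.integral_of_le zero_le_one]
  exact_mod_cast key

lemma J_facts {a : ℝ} (ha : 0 < a) (ha2 : a < 1/2) :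
    IntegrableOn (fun v : ℝ => v ^ (a-1) * (1+v) ^ (a-1)) (Ioi 0) ∧
    ∫ v in Ioi (0:ℝ), v ^ (a-1) * (1+v) ^ (a-1) = realBeta a (1-2*a) := by
  have hb : 0 < 1 - 2*a := by linarith
  set f : ℝ → ℝ := fun w => w / (1-w) with hf
  set g : ℝ → ℝ := fun v => v ^ (a-1) * (1+v) ^ (a-1) with hg
  have himg : f '' Ioo 0 1 = Ioi 0 := by
    ext x
    constructor
    · rintro ⟨w, ⟨hw0, hw1⟩, rfl⟩
      exact div_pos hw0 (by linarith)
    · intro hx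
      refine ⟨x / (1+x), ⟨div_pos hx (by linarith [mem_Ioi.1 hx]), ?_⟩, ?_⟩
      · rw [div_lt_one (by linarith [mem_Ioi.1 hx])]; linarith [mem_Ioi.1 hx]
      · have hx' : (0:ℝ) < x := hx
        simp only [hf]
        rw [div_eq_iff]
        · field_simp; ring
        · have : x / (1+x) < 1 := by rw [div_lt_one (by linarith)]; linarith
          intro h
          rw [sub_eq_zero] at h
          exact absurd h.symm (ne_of_lt this)
  have hderiv : ∀ w ∈ Ioo (0:ℝ) 1, HasDerivWithinAt f (((1-w)^2)⁻¹) (Ioo 0 1) w := by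
    intro w hw
    have h1 : (1:ℝ) - w ≠ 0 := by
      have := hw.2; intro h; rw [sub_eq_zero] at h; simp [← h] at this
    have := (hasDerivAt_id w).div ((hasDerivAt_const w (1:ℝ)).sub (hasDerivAt_id w)) h1
    refine this.hasDerivWithinAt.congr_deriv ?_
    show (1 * (1 - w) - w * (0 - 1)) / (1 - w) ^ 2 = ((1 - w) ^ 2)⁻¹
    rw [inv_eq_one_div]; congr 1; ring
  have hinj : InjOn f (Ioo 0 1) := by
    intro w1 h1 w2 h2 heq
    simp only [hf] at heq
    rw [div_eq_div_iff (by linarith [h1.2] : (1:ℝ) - w1 ≠ 0)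
      (by linarith [h2.2] : (1:ℝ) - w2 ≠ 0)] at heq
    nlinarith [heq]
  have hcong : EqOn (fun w => |((1-w)^2)⁻¹| • g (f w))
      (fun w : ℝ => w ^ (a-1) * (1-w) ^ ((1-2*a)-1)) (Ioo 0 1) := by
    intro w hw
    have h1 : (0:ℝ) < 1 - w := by linarith [hw.2]
    have hfw : 1 + f w = 1/(1-w) := by simp only [hf]; field_simp; ring
    simp only [hg, smul_eq_mul, hfw]
    rw [abs_of_pos (inv_pos.2 (pow_pos h1 2))]
    simp only [hf]
    rw [Real.div_rpow hw.1.le h1.le, Real.div_rpow zero_le_one h1.le, Real.one_rpow]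
    rw [div_eq_mul_inv, div_eq_mul_inv, one_mul]
    rw [← Real.rpow_natCast (1-w) 2, ← Real.rpow_neg h1.le, ← Real.rpow_neg h1.le]
    rw [show ((1-w) ^ (-((2:ℕ):ℝ)) * (w ^ (a-1) * (1-w) ^ (-(a-1)) * (1-w) ^ (-(a-1))) : ℝ)
      = w ^ (a-1) * ((1-w) ^ (-((2:ℕ):ℝ)) * (1-w) ^ (-(a-1)) * (1-w) ^ (-(a-1))) by ring]
    rw [← Real.rpow_add h1, ← Real.rpow_add h1]
    congr 1
    push_cast
    ring
  have hiff := integrableOn_image_iff_integrableOn_abs_deriv_smul measurableSet_Ioo hderiv hinj g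
  rw [himg] at hiff
  have hbeta := realBeta_facts ha hb
  have hInt : IntegrableOn g (Ioi (0:ℝ)) := by
    rw [hiff]
    exact hbeta.1.congr_fun (fun x hx => (hcong hx).symm) measurableSet_Ioo
  refine ⟨hInt, ?_⟩
  have hval := integral_image_eq_integral_abs_deriv_smul measurableSet_Ioo hderiv hinj g
  rw [himg] at hval
  rw [hval, setIntegral_congr_fun measurableSet_Ioo hcong, hbeta.2]

lemma key_facts {a s u : ℝ} (ha : 0 < a) (ha2 : a < 1/2) (hsu : s < u) :
    Integrable (fun x : ℝ => posPow (s-x) (a-1) * posPow (u-x) (a-1)) ∧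
    ∫ x : ℝ, posPow (s-x) (a-1) * posPow (u-x) (a-1)
      = realBeta a (1-2*a) * (u-s) ^ (2*a-1) := by
  have hd : 0 < u - s := by linarith
  set K : ℝ → ℝ := fun x => posPow (s-x) (a-1) * posPow (u-x) (a-1) with hK
  have hKind : K = (Iio s).indicator K := by
    funext x
    by_cases hx : x < s
    · rw [Set.indicator_of_mem (show x ∈ Iio s from hx)]
    · rw [Set.indicator_of_notMem (show x ∉ Iio s from hx), hK]
      simp only []
      rw [posPow_of_nonpos (by simp at hx; linarith)]
      ring
  set f : ℝ → ℝ := fun v => s - (u-s)*v with hf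
  have himg : f '' Ioi 0 = Iio s := by
    ext x
    constructor
    · rintro ⟨v, hv, rfl⟩
      simp only [hf, mem_Iio]
      nlinarith [mem_Ioi.1 hv]
    · intro hx
      refine ⟨(s - x)/(u-s), ?_, ?_⟩
      · exact div_pos (by linarith [mem_Iio.1 hx]) hd
      · simp only [hf]
        field_simp; ring
  have hderiv : ∀ v ∈ Ioi (0:ℝ), HasDerivWithinAt f (-(u-s)) (Ioi 0) v := by
    intro v hv
    have := (hasDerivAt_const v s).sub ((hasDerivAt_id v).const_mul (u-s))
    simp only [mul_one, zero_sub] at this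
    exact this.hasDerivWithinAt
  have hinj : InjOn f (Ioi 0) := by
    intro v1 _ v2 _ heq
    simp only [hf] at heq
    have : (u-s)*v1 = (u-s)*v2 := by linarith
    exact mul_left_cancel₀ hd.ne' this
  have hcong : EqOn (fun v => |(-(u-s))| • K (f v))
      (fun v : ℝ => (u-s) ^ (2*a-1) * (v ^ (a-1) * (1+v) ^ (a-1))) (Ioi 0) := by
    intro v hv
    have hv' : (0:ℝ) < v := hv
    have h1 : s - f v = (u-s)*v := by simp only [hf]; ring
    have h2 : u - f v = (u-s)*(1+v) := by simp only [hf]; ring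
    simp only [hK, smul_eq_mul, h1, h2]
    rw [abs_of_neg (by linarith : -(u-s) < 0), neg_neg]
    rw [posPow_of_pos (mul_pos hd hv'), posPow_of_pos (mul_pos hd (by linarith))]
    rw [Real.mul_rpow hd.le hv'.le, Real.mul_rpow hd.le (by linarith : (0:ℝ) ≤ 1 + v)]
    rw [show ((u-s) * ((u-s)^(a-1) * v^(a-1) * ((u-s)^(a-1) * (1+v)^(a-1))) : ℝ)
      = ((u-s) ^ (1:ℝ) * (u-s)^(a-1) * (u-s)^(a-1)) * (v^(a-1) * (1+v)^(a-1)) by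
        rw [Real.rpow_one]; ring]
    rw [← Real.rpow_add hd, ← Real.rpow_add hd]
    congr 2
    ring
  have hJ := J_facts ha ha2
  have hiff := integrableOn_image_iff_integrableOn_abs_deriv_smul measurableSet_Ioi hderiv hinj K
  rw [himg] at hiff
  have hIntIio : IntegrableOn K (Iio s) := by
    rw [hiff]
    exact IntegrableOn.congr_fun (hJ.1.const_mul ((u-s) ^ (2*a-1)))
      (fun x hx => (hcong hx).symm) measurableSet_Ioi
  have hInt : Integrable K := by
    rw [hKind]
    exact (integrable_indicator_iff measurableSet_Iio).2 hIntIio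
  refine ⟨hInt, ?_⟩
  have hval := integral_image_eq_integral_abs_deriv_smul measurableSet_Ioi hderiv hinj K
  rw [himg] at hval
  calc ∫ x, K x = ∫ x in Iio s, K x := by
        conv_lhs => rw [hKind]
        exact integral_indicator measurableSet_Iio
    _ = ∫ v in Ioi (0:ℝ), |(-(u-s))| • K (f v) := hval
    _ = ∫ v in Ioi (0:ℝ), (u-s) ^ (2*a-1) * (v ^ (a-1) * (1+v) ^ (a-1)) :=
        setIntegral_congr_fun measurableSet_Ioi hcong
    _ = (u-s) ^ (2*a-1) * ∫ v in Ioi (0:ℝ), v ^ (a-1) * (1+v) ^ (a-1) := by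
        rw [integral_const_mul]
    _ = realBeta a (1-2*a) * (u-s) ^ (2*a-1) := by rw [hJ.2]; ring

lemma posPow_base_intervalIntegrable {e : ℝ} (he : -1 < e) (A B : ℝ) :
    IntervalIntegrable (fun y => posPow y e) volume A B := by
  have hind : (fun y : ℝ => posPow y e) = (Ioi (0:ℝ)).indicator (fun y => y ^ e) := by
    funext y
    by_cases h : 0 < y
    · rw [posPow_of_pos h, indicator_of_mem (show y ∈ Ioi 0 from h)]
    · rw [posPow_of_nonpos (not_lt.1 h), indicator_of_notMem (show y ∉ Ioi 0 from h)]
  rw [intervalIntegrable_iff', hind, IntegrableOn,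
    integrable_indicator_iff measurableSet_Ioi, IntegrableOn,
    Measure.restrict_restrict measurableSet_Ioi]
  set M := max (max A B) 1 with hM
  have h1 : IntegrableOn (fun y : ℝ => y ^ e) (Ioc 0 M) :=
    (intervalIntegrable_iff_integrableOn_Ioc_of_le
      (le_trans zero_le_one (le_max_right _ 1))).1 (intervalIntegral.intervalIntegrable_rpow' he)
  refine h1.mono_set ?_
  rintro x ⟨hx1, hx2⟩
  refine ⟨hx1, ?_⟩
  rcases hx2 with ⟨_, hx3⟩
  calc x ≤ A ⊔ B := hx3
    _ ≤ M := le_max_left _ _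

lemma posPow_shift_intervalIntegrable {e : ℝ} (he : -1 < e) (c A B : ℝ) :
    IntervalIntegrable (fun s => posPow (s - c) e) volume A B := by
  have := (posPow_base_intervalIntegrable he (A - c) (B - c)).comp_sub_right c
  simpa using this

lemma prod_posPow_intervalIntegrable {e x₁ x₂ : ℝ} (he1 : -1 < e) (he2 : e ≤ 0)
    (hx : x₁ < x₂) (A B : ℝ) :
    IntervalIntegrable (fun s => posPow (s - x₁) e * posPow (s - x₂) e) volume A B := by
  have hC : (0:ℝ) ≤ (x₂ - x₁) ^ e := Real.rpow_nonneg (by linarith) e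
  have hbound := (posPow_shift_intervalIntegrable he1 x₂ A B).const_mul ((x₂ - x₁) ^ e)
  refine hbound.mono_fun' ?_ ?_
  · exact (((measurable_posPow e).comp (measurable_id.sub_const x₁)).mul
      ((measurable_posPow e).comp (measurable_id.sub_const x₂))).aestronglyMeasurable
  · refine Filter.Eventually.of_forall (fun s => ?_)
    simp only [norm_mul, Real.norm_eq_abs, abs_of_nonneg (posPow_nonneg _ _)]
    by_cases hs : x₂ < s
    · rw [posPow_of_pos (by linarith : 0 < s - x₂), posPow_of_pos (by linarith : 0 < s - x₁)]
      apply mul_le_mul_of_nonneg_right _ (Real.rpow_nonneg (by linarith) e)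
      exact Real.rpow_le_rpow_of_nonpos (by linarith) (by linarith) he2
    · rw [posPow_of_nonpos (by linarith [not_lt.1 hs] : s - x₂ ≤ 0)]
      simp [hC]

lemma abs_rpow_eq_posPow_add {q : ℝ} (hq : q ≠ 0) (s u : ℝ) :
    |s - u| ^ q = posPow (u - s) q + posPow (s - u) q := by
  rcases lt_trichotomy u s with h | h | h
  · rw [posPow_of_nonpos (by linarith), posPow_of_pos (by linarith : 0 < s - u),
      abs_of_pos (by linarith : 0 < s - u)]
    ring
  · subst h
    simp [posPow_of_nonpos, Real.zero_rpow hq]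
  · rw [posPow_of_pos (by linarith : 0 < u - s), posPow_of_nonpos (by linarith),
      abs_of_neg (by linarith : s - u < 0)]
    rw [neg_sub]
    ring

lemma abs_rpow_intervalIntegrable {q : ℝ} (hq : q ≠ 0) (hq1 : -1 < q) (s A B : ℝ) :
    IntervalIntegrable (fun u => |s - u| ^ q) volume A B := by
  have hfun : (fun u : ℝ => |s - u| ^ q)
      = fun u => posPow (u - s) q + posPow (s - u) q :=
    funext fun u => abs_rpow_eq_posPow_add hq s u
  rw [hfun]
  have h1 : IntervalIntegrable (fun u => posPow (u - s) q) volume A B :=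
    posPow_shift_intervalIntegrable hq1 s A B
  have h2 : IntervalIntegrable (fun u => posPow (s - u) q) volume A B := by
    have := (posPow_base_intervalIntegrable hq1 (s - B) (s - A)).comp_sub_left s
    simpa using this.symm
  exact h1.add h2

lemma posPow_integral {q A C : ℝ} (hq1 : -1 < q) (hq2 : q < 0) (hA : A ≤ 0) (hC : 0 ≤ C) :
    ∫ y in A..C, posPow y q = C ^ (q+1) / (q+1) := by
  have h1 : IntervalIntegrable (fun y => posPow y q) volume A 0 :=
    posPow_base_intervalIntegrable hq1 A 0
  have h2 : IntervalIntegrable (fun y => posPow y q) volume 0 C :=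
    posPow_base_intervalIntegrable hq1 0 C
  rw [← intervalIntegral.integral_add_adjacent_intervals h1 h2]
  have e1 : ∫ y in A..(0:ℝ), posPow y q = 0 := by
    rw [intervalIntegral.integral_congr (g := fun _ => (0:ℝ)) ?_, intervalIntegral.integral_zero]
    intro y hy
    rw [Set.uIcc_of_le hA] at hy
    exact posPow_of_nonpos hy.2 q
  have e2 : ∫ y in (0:ℝ)..C, posPow y q = C ^ (q+1) / (q+1) := by
    rw [intervalIntegral.integral_congr (g := fun y => y ^ q) ?_]
    · rw [integral_rpow (Or.inl hq1), Real.zero_rpow (by linarith : q + 1 ≠ 0), sub_zero]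
    · intro y hy
      rw [Set.uIcc_of_le hC] at hy
      rcases eq_or_lt_of_le hy.1 with h | h
      · rw [← h]
        show posPow 0 q = (0:ℝ) ^ q
        rw [posPow_of_nonpos le_rfl, Real.zero_rpow (by linarith : q ≠ 0)]
      · exact posPow_of_pos h q
  rw [e1, e2, zero_add]

lemma inner_time_integral {q t s : ℝ} (hq1 : -1 < q) (hq2 : q < 0) (ht : 0 < t)
    (hs : s ∈ Icc (0:ℝ) t) :
    ∫ u in (0:ℝ)..t, |s - u| ^ q = (s ^ (q+1) + (t - s) ^ (q+1)) / (q+1) := by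
  have hcong : ∀ u, |s - u| ^ q = posPow (u - s) q + posPow (s - u) q :=
    abs_rpow_eq_posPow_add (by linarith) s
  simp only [hcong]
  have h1 : IntervalIntegrable (fun u => posPow (u - s) q) volume 0 t := by
    have := (posPow_base_intervalIntegrable hq1 (0 - s) (t - s)).comp_sub_right s
    simpa using this
  have h2 : IntervalIntegrable (fun u => posPow (s - u) q) volume 0 t := by
    have := (posPow_base_intervalIntegrable hq1 (s - t) (s - 0)).comp_sub_left s
    simpa using this.symm
  rw [intervalIntegral.integral_add h1 h2]
  have e1 : ∫ u in (0:ℝ)..t, posPow (u - s) q = (t - s) ^ (q+1) / (q+1) := by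
    rw [intervalIntegral.integral_comp_sub_right (fun y => posPow y q) s]
    rw [posPow_integral hq1 hq2 (by linarith [hs.1] : (0:ℝ) - s ≤ 0) (by linarith [hs.2])]
  have e2 : ∫ u in (0:ℝ)..t, posPow (s - u) q = s ^ (q+1) / (q+1) := by
    rw [intervalIntegral.integral_comp_sub_left (fun y => posPow y q) s]
    rw [posPow_integral hq1 hq2 (by linarith [hs.2]) (by linarith [hs.1] : (0:ℝ) ≤ s - 0)]
    rw [sub_zero]
  rw [e1, e2]
  ring

lemma outer_time_integral {q t : ℝ} (hq1 : -1 < q) (hq2 : q < 0) (ht : 0 < t) :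
    ∫ s in (0:ℝ)..t, (s ^ (q+1) + (t - s) ^ (q+1)) / (q+1)
      = 2 * t ^ (q+2) / ((q+1)*(q+2)) := by
  have hi1 : IntervalIntegrable (fun s : ℝ => s ^ (q+1)) volume 0 t :=
    intervalIntegral.intervalIntegrable_rpow' (by linarith)
  have hi2 : IntervalIntegrable (fun s : ℝ => (t - s) ^ (q+1)) volume 0 t := by
    have := (intervalIntegral.intervalIntegrable_rpow'
      (a := t - t) (b := t - 0) (by linarith : (-1:ℝ) < q + 1)).comp_sub_left t
    simpa using this.symm
  simp only [div_eq_mul_inv]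
  rw [intervalIntegral.integral_mul_const, intervalIntegral.integral_add hi1 hi2]
  have e1 : ∫ s in (0:ℝ)..t, s ^ (q+1) = t ^ (q+2) / (q+2) := by
    rw [integral_rpow (Or.inl (by linarith : (-1:ℝ) < q+1)),
      Real.zero_rpow (by linarith : q + 1 + 1 ≠ 0), sub_zero]
    rw [show q + 1 + 1 = q + 2 by ring]
  have e2 : ∫ s in (0:ℝ)..t, (t - s) ^ (q+1) = t ^ (q+2) / (q+2) := by
    rw [intervalIntegral.integral_comp_sub_left (fun y => y ^ (q+1)) t]
    rw [sub_self, sub_zero, integral_rpow (Or.inl (by linarith : (-1:ℝ) < q+1)),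
      Real.zero_rpow (by linarith : q + 1 + 1 ≠ 0), sub_zero]
    rw [show q + 1 + 1 = q + 2 by ring]
  rw [e1, e2]
  have hq1' : q + 1 ≠ 0 := by linarith
  have hq2' : q + 2 ≠ 0 := by linarith
  field_simp
  ring

lemma diag_null (μ ν : Measure ℝ) [SFinite ν] (hν : ∀ x : ℝ, ν {x} = 0) :
    (μ.prod ν) {z : ℝ × ℝ | z.1 = z.2} = 0 := by
  have hmeas : MeasurableSet {z : ℝ × ℝ | z.1 = z.2} :=
    measurableSet_eq_fun measurable_fst measurable_snd
  rw [MeasureTheory.Measure.prod_apply hmeas]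
  have hpre : ∀ x : ℝ, (Prod.mk x ⁻¹' {z : ℝ × ℝ | z.1 = z.2}) = {x} := by
    intro x; ext y; simp [eq_comm]
  simp only [hpre, hν]
  simp

end Aux

theorem statement2 (H : ℝ) (hH : H ∈ Set.Ioo (1/2 : ℝ) 1) (t : ℝ) (ht : 0 < t) :
    Integrable (fun p : ℝ × ℝ => (rosKernel H t p.1 p.2)^2) ∧
    ∫ p : ℝ × ℝ, (rosKernel H t p.1 p.2)^2 = t ^ (2*H) / 2 := by
  obtain ⟨hH1, hH2⟩ := hH
  have ha : 0 < H/2 := by linarith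
  have ha2 : H/2 < 1/2 := by linarith
  have he1 : (-1:ℝ) < H/2 - 1 := by linarith
  have he2 : H/2 - 1 ≤ 0 := by linarith
  have hq1 : (-1:ℝ) < 2*H - 2 := by linarith
  have hq2 : 2*H - 2 < 0 := by linarith
  set B : ℝ := realBeta (H/2) (1-H) with hB_def
  have hBpos : 0 < B := realBeta_pos ha (by linarith)
  set F : ℝ × ℝ → ℝ → ℝ :=
    fun p s => posPow (s - p.1) (H/2 - 1) * posPow (s - p.2) (H/2 - 1) with hF_def
  have hFnn : ∀ p s, 0 ≤ F p s := fun p s =>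
    mul_nonneg (posPow_nonneg _ _) (posPow_nonneg _ _)
  have hFmeas : Measurable (fun z : (ℝ × ℝ) × ℝ => F z.1 z.2) := by
    apply Measurable.mul
    · exact (measurable_posPow _).comp (measurable_snd.sub measurable_fst.fst)
    · exact (measurable_posPow _).comp (measurable_snd.sub measurable_fst.snd)
  -- spatial integral for fixed s ≠ u
  have hspatial : ∀ s u : ℝ, s ≠ u →
      (∫⁻ p : ℝ × ℝ, ENNReal.ofReal (F p s * F p u))
        = ENNReal.ofReal (B^2 * |s-u| ^ (2*H-2)) := by
    intro s u hsu
    set k : ℝ → ℝ := fun x => posPow (s-x) (H/2-1) * posPow (u-x) (H/2-1) with hk_def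
    have hknn : ∀ x, 0 ≤ k x := fun x =>
      mul_nonneg (posPow_nonneg _ _) (posPow_nonneg _ _)
    have hk : Integrable k ∧ ∫ x : ℝ, k x = B * |s-u| ^ (H-1) := by
      rcases hsu.lt_or_gt with h | h
      · have := key_facts ha ha2 h
        refine ⟨this.1, ?_⟩
        rw [this.2, abs_of_neg (by linarith : s - u < 0), neg_sub]
        congr 2 <;> ring
      · have := key_facts ha ha2 h
        have hswapk : k = fun x => posPow (u-x) (H/2-1) * posPow (s-x) (H/2-1) :=
          funext fun x => mul_comm _ _
        rw [hswapk]
        refine ⟨this.1, ?_⟩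
        rw [this.2, abs_of_pos (by linarith : 0 < s - u)]
        congr 2 <;> ring
    have hprod : ∀ p : ℝ × ℝ, ENNReal.ofReal (F p s * F p u)
        = ENNReal.ofReal (k p.1) * ENNReal.ofReal (k p.2) := by
      intro p
      rw [← ENNReal.ofReal_mul (hknn p.1)]
      congr 1
      simp only [hF_def, hk_def]
      ring
    rw [lintegral_congr hprod]
    rw [MeasureTheory.Measure.volume_eq_prod]
    have hkmeas : Measurable fun x => ENNReal.ofReal (k x) := by
      apply Measurable.ennreal_ofReal
      exact ((measurable_posPow _).comp (measurable_const.sub measurable_id)).mul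
        ((measurable_posPow _).comp (measurable_const.sub measurable_id))
    rw [lintegral_prod_mul hkmeas.aemeasurable hkmeas.aemeasurable]
    have hofReal : ∫⁻ x, ENNReal.ofReal (k x) = ENNReal.ofReal (B * |s-u| ^ (H-1)) := by
      rw [← hk.2]
      exact (ofReal_integral_eq_lintegral_ofReal hk.1
        (Filter.Eventually.of_forall hknn)).symm
    rw [hofReal, ← ENNReal.ofReal_mul (by positivity)]
    congr 1
    have habs : (0:ℝ) < |s-u| := abs_pos.2 (sub_ne_zero.2 hsu)
    rw [show (B * |s-u| ^ (H-1)) * (B * |s-u| ^ (H-1))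
        = B^2 * (|s-u| ^ (H-1) * |s-u| ^ (H-1)) by ring]
    rw [← Real.rpow_add habs]
    congr 2
    ring
  -- time double lintegral of |s-u|^(2H-2)
  have htime : (∫⁻ s in Ioc (0:ℝ) t, ∫⁻ u in Ioc (0:ℝ) t,
      ENNReal.ofReal (B^2 * |s-u| ^ (2*H-2)))
        = ENNReal.ofReal (B^2 * (t ^ (2*H) / (H*(2*H-1)))) := by
    have hq0 : (2*H-2 : ℝ) ≠ 0 := by linarith
    have hinner : ∀ s ∈ Ioc (0:ℝ) t,
        (∫⁻ u in Ioc (0:ℝ) t, ENNReal.ofReal (B^2 * |s-u| ^ (2*H-2)))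
          = ENNReal.ofReal (B^2 * ((s ^ (2*H-1) + (t-s) ^ (2*H-1)) / (2*H-1))) := by
      intro s hs
      have hii : IntegrableOn (fun u => B^2 * |s-u| ^ (2*H-2)) (Ioc 0 t) :=
        (intervalIntegrable_iff_integrableOn_Ioc_of_le ht.le).1
          ((abs_rpow_intervalIntegrable hq0 hq1 s 0 t).const_mul (B^2))
      rw [← ofReal_integral_eq_lintegral_ofReal hii
        (Filter.Eventually.of_forall fun u => by positivity)]
      congr 1
      rw [← intervalIntegral.integral_of_le ht.le, intervalIntegral.integral_const_mul]
      rw [inner_time_integral hq1 hq2 ht ⟨hs.1.le, hs.2⟩]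
      rw [show (2*H-2) + 1 = 2*H - 1 by ring]
    rw [setLIntegral_congr_fun measurableSet_Ioc
      hinner]
    have hio : IntegrableOn
        (fun s : ℝ => B^2 * ((s ^ (2*H-1) + (t-s) ^ (2*H-1)) / (2*H-1))) (Ioc 0 t) := by
      apply (intervalIntegrable_iff_integrableOn_Ioc_of_le ht.le).1
      apply IntervalIntegrable.const_mul
      apply IntervalIntegrable.div_const
      refine IntervalIntegrable.add ?_ ?_
      · exact intervalIntegral.intervalIntegrable_rpow' (by linarith)
      · have := (intervalIntegral.intervalIntegrable_rpow'
          (a := t - t) (b := t - 0) (by linarith : (-1:ℝ) < 2*H-1)).comp_sub_left t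
        simpa using this.symm
    rw [← ofReal_integral_eq_lintegral_ofReal hio ?hnn]
    case hnn =>
      refine (ae_restrict_iff' measurableSet_Ioc).2 (Filter.Eventually.of_forall fun x hx => ?_)
      have h1 : (0:ℝ) ≤ x ^ (2*H-1) := Real.rpow_nonneg hx.1.le _
      have h2 : (0:ℝ) ≤ (t-x) ^ (2*H-1) := Real.rpow_nonneg (by linarith [hx.2]) _
      have : (0:ℝ) ≤ B^2 * ((x ^ (2*H-1) + (t-x) ^ (2*H-1)) / (2*H-1)) :=
        mul_nonneg (sq_nonneg B) (div_nonneg (by linarith) (by linarith))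
      simpa using this
    congr 1
    rw [← intervalIntegral.integral_of_le ht.le, intervalIntegral.integral_const_mul]
    have := outer_time_integral hq1 hq2 ht
    rw [show (2*H-2) + 1 = 2*H-1 by ring, show (2*H-2) + 2 = 2*H by ring] at this
    rw [this]
    have hHne : H ≠ 0 := by linarith
    have h2Hne : 2*H - 1 ≠ 0 := by linarith
    congr 1
    field_simp
  -- measurability of the kernel as a function of the pair
  have hros_eq : ∀ p : ℝ × ℝ, rosKernel H t p.1 p.2
      = cH H * ∫ s in Ioc (0:ℝ) t, F p s := by
    intro p
    rw [rosKernel, intervalIntegral.integral_of_le ht.le]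
  have hmeas_ros : Measurable (fun p : ℝ × ℝ => rosKernel H t p.1 p.2) := by
    have : (fun p : ℝ × ℝ => rosKernel H t p.1 p.2)
        = fun p : ℝ × ℝ => cH H * ∫ s in Ioc (0:ℝ) t, F p s := funext hros_eq
    rw [this]
    apply Measurable.const_mul
    exact (StronglyMeasurable.integral_prod_right'
      (f := fun z : (ℝ × ℝ) × ℝ => F z.1 z.2) hFmeas.stronglyMeasurable).measurable
  -- a.e. pointwise identity
  have hae : ∀ p : ℝ × ℝ, p.1 ≠ p.2 →
      ENNReal.ofReal ((rosKernel H t p.1 p.2)^2)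
        = ENNReal.ofReal ((cH H)^2) *
          ∫⁻ s in Ioc (0:ℝ) t, ∫⁻ u in Ioc (0:ℝ) t, ENNReal.ofReal (F p s * F p u) := by
    intro p hp
    have hint : IntervalIntegrable (F p) volume 0 t := by
      rcases hp.lt_or_gt with h | h
      · exact prod_posPow_intervalIntegrable he1 he2 h 0 t
      · have := prod_posPow_intervalIntegrable he1 he2 h 0 t
        have hsw : (fun s => posPow (s - p.2) (H/2-1) * posPow (s - p.1) (H/2-1)) = F p :=
          funext fun s => mul_comm _ _
        rwa [hsw] at this
    have hIoc : IntegrableOn (F p) (Ioc 0 t) :=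
      (intervalIntegrable_iff_integrableOn_Ioc_of_le ht.le).1 hint
    have hgmeas : Measurable fun s => ENNReal.ofReal (F p s) := by
      apply Measurable.ennreal_ofReal
      exact ((measurable_posPow _).comp (measurable_id.sub_const p.1)).mul
        ((measurable_posPow _).comp (measurable_id.sub_const p.2))
    have hofX : ENNReal.ofReal (∫ s in (0:ℝ)..t, F p s)
        = ∫⁻ s in Ioc (0:ℝ) t, ENNReal.ofReal (F p s) := by
      rw [intervalIntegral.integral_of_le ht.le]
      exact ofReal_integral_eq_lintegral_ofReal hIoc
        (Filter.Eventually.of_forall fun s => hFnn p s)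
    have hXnn : 0 ≤ ∫ s in (0:ℝ)..t, F p s :=
      intervalIntegral.integral_nonneg ht.le (fun s _ => hFnn p s)
    rw [rosKernel, mul_pow, ENNReal.ofReal_mul (by positivity), sq (∫ s in (0:ℝ)..t, _),
      ENNReal.ofReal_mul hXnn]
    congr 1
    rw [hofX]
    rw [← lintegral_mul_const _ hgmeas]
    apply lintegral_congr
    intro s
    rw [← lintegral_const_mul _ hgmeas]
    apply lintegral_congr
    intro u
    exact (ENNReal.ofReal_mul (hFnn p s)).symm
  -- total lintegral computation
  set ρ : Measure (ℝ × ℝ) :=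
    (volume.restrict (Ioc (0:ℝ) t)).prod (volume.restrict (Ioc (0:ℝ) t)) with hρ_def
  have hGmeas : Measurable (fun w : (ℝ × ℝ) × (ℝ × ℝ) =>
      ENNReal.ofReal (F w.1 w.2.1 * F w.1 w.2.2)) := by
    apply Measurable.ennreal_ofReal
    exact (hFmeas.comp (measurable_fst.prodMk measurable_snd.fst)).mul
      (hFmeas.comp (measurable_fst.prodMk measurable_snd.snd))
  have hGp : ∀ p : ℝ × ℝ, Measurable (fun z : ℝ × ℝ => ENNReal.ofReal (F p z.1 * F p z.2)) := by
    intro p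
    apply Measurable.ennreal_ofReal
    apply Measurable.mul
    · exact ((measurable_posPow _).comp (measurable_fst.sub_const p.1)).mul
        ((measurable_posPow _).comp (measurable_fst.sub_const p.2))
    · exact ((measurable_posPow _).comp (measurable_snd.sub_const p.1)).mul
        ((measurable_posPow _).comp (measurable_snd.sub_const p.2))
  have hiter : ∀ p : ℝ × ℝ,
      (∫⁻ s in Ioc (0:ℝ) t, ∫⁻ u in Ioc (0:ℝ) t, ENNReal.ofReal (F p s * F p u))
        = ∫⁻ z, ENNReal.ofReal (F p z.1 * F p z.2) ∂ρ := by
    intro p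
    exact lintegral_lintegral (hGp p).aemeasurable
  have hae_offdiag : ∀ᵐ p : ℝ × ℝ, p.1 ≠ p.2 := by
    rw [Filter.eventually_iff, mem_ae_iff]
    have : {p : ℝ × ℝ | p.1 ≠ p.2}ᶜ = {p : ℝ × ℝ | p.1 = p.2} := by
      ext p; simp
    rw [this, MeasureTheory.Measure.volume_eq_prod]
    exact diag_null volume volume (fun x => Real.volume_singleton)
  have htotal : (∫⁻ p : ℝ × ℝ, ENNReal.ofReal ((rosKernel H t p.1 p.2)^2))
      = ENNReal.ofReal (t ^ (2*H) / 2) := by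
    have step1 : (∫⁻ p : ℝ × ℝ, ENNReal.ofReal ((rosKernel H t p.1 p.2)^2))
        = ∫⁻ p : ℝ × ℝ, ENNReal.ofReal ((cH H)^2) *
            ∫⁻ z, ENNReal.ofReal (F p z.1 * F p z.2) ∂ρ := by
      apply lintegral_congr_ae
      filter_upwards [hae_offdiag] with p hp
      rw [hae p hp, hiter p]
    rw [step1]
    have hΦmeas : Measurable fun p : ℝ × ℝ =>
        ∫⁻ z, ENNReal.ofReal (F p z.1 * F p z.2) ∂ρ :=
      hGmeas.lintegral_prod_right'
    rw [lintegral_const_mul _ hΦmeas]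
    have hswap : (∫⁻ p : ℝ × ℝ, ∫⁻ z, ENNReal.ofReal (F p z.1 * F p z.2) ∂ρ)
        = ∫⁻ z, (∫⁻ p : ℝ × ℝ, ENNReal.ofReal (F p z.1 * F p z.2)) ∂ρ :=
      lintegral_lintegral_swap hGmeas.aemeasurable
    rw [hswap]
    have hae_offdiag2 : ∀ᵐ z : ℝ × ℝ ∂ρ, z.1 ≠ z.2 := by
      rw [Filter.eventually_iff, mem_ae_iff]
      have : {z : ℝ × ℝ | z.1 ≠ z.2}ᶜ = {z : ℝ × ℝ | z.1 = z.2} := by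
        ext z; simp
      rw [this, hρ_def]
      exact diag_null _ _ (fun x => by
        rw [Measure.restrict_apply (measurableSet_singleton x)]
        exact measure_mono_null (Set.inter_subset_left) Real.volume_singleton)
    have step2 : (∫⁻ z, (∫⁻ p : ℝ × ℝ, ENNReal.ofReal (F p z.1 * F p z.2)) ∂ρ)
        = ∫⁻ z, ENNReal.ofReal (B^2 * |z.1-z.2| ^ (2*H-2)) ∂ρ := by
      apply lintegral_congr_ae
      filter_upwards [hae_offdiag2] with z hz
      exact hspatial z.1 z.2 hz
    rw [step2]
    have step3 : (∫⁻ z, ENNReal.ofReal (B^2 * |z.1-z.2| ^ (2*H-2)) ∂ρ)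
        = ∫⁻ s in Ioc (0:ℝ) t, ∫⁻ u in Ioc (0:ℝ) t,
            ENNReal.ofReal (B^2 * |s-u| ^ (2*H-2)) := by
      rw [hρ_def]
      refine (lintegral_lintegral
        (f := fun s u => ENNReal.ofReal (B ^ 2 * |s - u| ^ (2*H-2))) ?_).symm
      apply Measurable.aemeasurable
      apply Measurable.ennreal_ofReal
      apply Measurable.const_mul
      have hrm : Measurable (fun y : ℝ => y ^ (2*H-2)) := by fun_prop
      exact hrm.comp ((measurable_fst.sub measurable_snd).abs)
    rw [step3, htime, ← ENNReal.ofReal_mul (by positivity)]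
    congr 1
    -- constants
    have hBne : realBeta (1-H) (H/2) ≠ 0 := (realBeta_pos (by linarith) ha).ne'
    have hBsymm : B = realBeta (1-H) (H/2) := realBeta_symm _ _
    rw [cH, div_pow, Real.sq_sqrt (by nlinarith : (0:ℝ) ≤ H * (2*H-1) / 2), hBsymm]
    have hHne : H ≠ 0 := by linarith
    have h2Hne : 2*H - 1 ≠ 0 := by linarith
    field_simp
    ring_nf; linear_combination inv_mul_cancel₀ (show (-1 + H*2) ≠ 0 by linarith)
  -- conclude
  have hnn : ∀ p : ℝ × ℝ, 0 ≤ (rosKernel H t p.1 p.2)^2 := fun p => sq_nonneg _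
  have haesm : AEStronglyMeasurable (fun p : ℝ × ℝ => (rosKernel H t p.1 p.2)^2) volume :=
    ((hmeas_ros.pow_const 2).aestronglyMeasurable)
  have hInt : Integrable (fun p : ℝ × ℝ => (rosKernel H t p.1 p.2)^2) := by
    refine ⟨haesm, ?_⟩
    rw [hasFiniteIntegral_iff_ofReal (Filter.Eventually.of_forall hnn)]
    rw [htotal]
    exact ENNReal.ofReal_lt_top
  refine ⟨hInt, ?_⟩
  rw [integral_eq_lintegral_of_nonneg_ae (Filter.Eventually.of_forall hnn) haesm, htotal,
    ENNReal.toReal_ofReal (by positivity)]
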